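/- For real numbers a > 0, the function λ ↦ (e^{2λa} - e^{λa})/(e^{2λa} - 1) is strictly monotone increasing on (0, ∞). -/

import Mathlib

/-! With `t = exp (l * a)` the function is `(t ^ 2 - t) / (t ^ 2 - 1) = t / (t + 1) = 1 - 1 / (t + 1)`,
which increases with `t`, and `t` increases with `l` because `a > 0`. -/

open Real Set

theorem sq_sub_self_div_sq_sub_one {K : Type*} [Field K] {t : K} (ht : t ≠ 1) :
    (t ^ 2 - t) / (t ^ 2 - 1) = t / (t + 1) := by
  have hsub : t - 1 ≠ 0 := sub_ne_zero.mpr ht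
  rw [show t ^ 2 - t = t * (t - 1) by ring, show t ^ 2 - 1 = (t + 1) * (t - 1) by ring,
    mul_div_mul_right _ _ hsub]

theorem strictMonoOn_div_add_one {K : Type*} [Field K] [LinearOrder K] [IsStrictOrderedRing K] :
    StrictMonoOn (fun t : K => t / (t + 1)) (Ioi (-1)) := by
  intro x hx y hy hxy
  have hx1 : 0 < x + 1 := neg_lt_iff_pos_add.mp hx
  have hy1 : 0 < y + 1 := neg_lt_iff_pos_add.mp hy
  show x / (x + 1) < y / (y + 1)
  rw [div_lt_div_iff₀ hx1 hy1]
  linarith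

theorem F_strictMonoOn (a : ℝ) (ha : 0 < a) :
    StrictMonoOn (fun l : ℝ => (exp (2 * l * a) - exp (l * a)) / (exp (2 * l * a) - 1))
      (Ioi (0 : ℝ)) := by
  have hexp : StrictMono fun l : ℝ => exp (l * a) :=
    exp_strictMono.comp (strictMono_mul_right_of_pos ha)
  have hmaps : MapsTo (fun l : ℝ => exp (l * a)) (Ioi 0) (Ioi (-1)) :=
    fun l _ => neg_one_lt_zero.trans (exp_pos _)
  refine (strictMonoOn_div_add_one.comp (hexp.strictMonoOn _) hmaps).congr fun l hl => ?_
  have hne : exp (l * a) ≠ 1 := (one_lt_exp_iff.mpr (mul_pos hl ha)).ne'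
  rw [Function.comp_apply, ← sq_sub_self_div_sq_sub_one hne, ← exp_nat_mul]
  ring_nf
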